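/- With S(l) = (1/2)·(√(1 − 2κ(l))/κ(l) − 1) and κ(l) = cosh(√(4πl)/3^{1/4}) − 1, one has 2π·l·√(S(l))·√(1 + S(l)) → √3/2 as l → 0⁺; that is, the hyperbolic area 2π·l·sinh(r_max(l))·cosh(r_max(l)) of the boundary torus of the maximal tube around a closed geodesic of real length l tends to √3/2 as l → 0⁺. -/

import Mathlib

open Real Filter Topology

/-- Meyerhoff's function κ(l) = cosh(√(4πl)/3^{1/4}) − 1. -/
noncomputable def kappa (l : ℝ) : ℝ :=
  Real.cosh (Real.sqrt (4 * Real.pi * l) / (3 : ℝ) ^ ((1 : ℝ) / 4)) - 1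

/-- S(l) = (1/2)(√(1 − 2κ(l))/κ(l) − 1), so that sinh² r_max(l) = S(l). -/
noncomputable def Sfun (l : ℝ) : ℝ :=
  (1 / 2) * (Real.sqrt (1 - 2 * kappa l) / kappa l - 1)

/-!
Since `cosh x - 1 ~ x ^ 2 / 2`, `κ(l) ~ 2πl/√3`, while `κS = (√(1 - 2κ) - κ)/2` and
`κ(1 + S) = (√(1 - 2κ) + κ)/2` both tend to `1/2` as `κ → 0`. Writing the area as
`(2πl/κ) · √(κS) · √(κ(1 + S))`, it tends to `√3 · 1/2`.
-/

lemma tendsto_sinh_div_self : Tendsto (fun x : ℝ => sinh x / x) (𝓝[≠] 0) (𝓝 1) := by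
  have h := hasDerivAt_sinh 0
  rw [hasDerivAt_iff_tendsto_slope] at h
  simpa [slope_fun_def, div_eq_inv_mul] using h

lemma tendsto_cosh_sub_one_div_sq :
    Tendsto (fun x : ℝ => (cosh x - 1) / x ^ 2) (𝓝[≠] 0) (𝓝 (1 / 2)) := by
  have h : Tendsto (fun x : ℝ => (sinh x / x) ^ 2 / (cosh x + 1)) (𝓝[≠] 0) (𝓝 (1 / 2)) := by
    have hcosh : Tendsto (fun x : ℝ => cosh x + 1) (𝓝[≠] 0) (𝓝 2) := by
      have := (continuous_cosh.tendsto 0).add_const 1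
      norm_num at this
      exact this.mono_left nhdsWithin_le_nhds
    have h := (tendsto_sinh_div_self.pow 2).div hcosh two_ne_zero
    rwa [one_pow] at h
  refine h.congr fun x => ?_
  have hc : cosh x + 1 ≠ 0 := by linarith [one_le_cosh x]
  rw [div_pow, sinh_sq]
  field_simp
  ring

lemma sq_sqrt_div_rpow {l : ℝ} (hl : 0 ≤ l) :
    (√(4 * π * l) / (3 : ℝ) ^ ((1 : ℝ) / 4)) ^ 2 = 4 * π * l / √3 := by
  rw [div_pow, sq_sqrt (by positivity), ← rpow_natCast, ← rpow_mul (by norm_num), sqrt_eq_rpow]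
  norm_num

lemma kappa_pos {l : ℝ} (hl : 0 < l) : 0 < kappa l := by
  rw [kappa, sub_pos, one_lt_cosh]
  positivity

lemma tendsto_kappa_nhds_zero : Tendsto kappa (𝓝[>] 0) (𝓝 0) := by
  have hc : Continuous kappa := by unfold kappa; fun_prop
  simpa [kappa] using (hc.tendsto 0).mono_left nhdsWithin_le_nhds

lemma tendsto_two_pi_mul_div_kappa :
    Tendsto (fun l => 2 * π * l / kappa l) (𝓝[>] 0) (𝓝 √3) := by
  set x : ℝ → ℝ := fun l => √(4 * π * l) / (3 : ℝ) ^ ((1 : ℝ) / 4)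
  have hx : Tendsto x (𝓝[>] 0) (𝓝[≠] 0) := by
    refine tendsto_nhdsWithin_iff.mpr ⟨?_, ?_⟩
    · have hc : Continuous x := by fun_prop
      simpa [x] using (hc.tendsto 0).mono_left nhdsWithin_le_nhds
    · filter_upwards [self_mem_nhdsWithin] with l (hl : 0 < l)
      exact (show 0 < x l by positivity).ne'
  have h := ((tendsto_cosh_sub_one_div_sq.comp hx).inv₀ (by norm_num)).const_mul (√3 / 2)
  rw [show √3 / 2 * (1 / 2)⁻¹ = √3 by ring] at h
  refine h.congr' ?_
  filter_upwards [self_mem_nhdsWithin] with l (hl : 0 < l)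
  have hk := kappa_pos hl
  simp only [Function.comp_apply, inv_div, kappa, x] at hk ⊢
  rw [sq_sqrt_div_rpow hl.le]
  field_simp
  norm_num

lemma kappa_mul_Sfun {l : ℝ} (hk : kappa l ≠ 0) :
    kappa l * Sfun l = (√(1 - 2 * kappa l) - kappa l) / 2 := by
  rw [Sfun]
  field_simp

lemma kappa_mul_one_add_Sfun {l : ℝ} (hk : kappa l ≠ 0) :
    kappa l * (1 + Sfun l) = (√(1 - 2 * kappa l) + kappa l) / 2 := by
  rw [mul_one_add, kappa_mul_Sfun hk]
  ring

lemma tendsto_kappa_mul_Sfun :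
    Tendsto (fun l => kappa l * Sfun l) (𝓝[>] 0) (𝓝 (1 / 2)) := by
  have hc : Continuous fun t : ℝ => (√(1 - 2 * t) - t) / 2 := by fun_prop
  have h := (hc.tendsto 0).comp tendsto_kappa_nhds_zero
  norm_num at h
  refine h.congr' ?_
  filter_upwards [self_mem_nhdsWithin] with l (hl : 0 < l)
  exact (kappa_mul_Sfun (kappa_pos hl).ne').symm

lemma tendsto_kappa_mul_one_add_Sfun :
    Tendsto (fun l => kappa l * (1 + Sfun l)) (𝓝[>] 0) (𝓝 (1 / 2)) := by
  have hc : Continuous fun t : ℝ => (√(1 - 2 * t) + t) / 2 := by fun_prop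
  have h := (hc.tendsto 0).comp tendsto_kappa_nhds_zero
  norm_num at h
  refine h.congr' ?_
  filter_upwards [self_mem_nhdsWithin] with l (hl : 0 < l)
  exact (kappa_mul_one_add_Sfun (kappa_pos hl).ne').symm

/-- The area 2π·l·sinh(r_max(l))·cosh(r_max(l))
= 2π·l·√S(l)·√(1+S(l)) of the boundary torus of the maximal tube tends
to √3/2 as l → 0⁺. -/
theorem boundary_torus_area_tendsto :
    Tendsto (fun l : ℝ =>
        2 * Real.pi * l * Real.sqrt (Sfun l) * Real.sqrt (1 + Sfun l))
      (𝓝[>] (0 : ℝ)) (𝓝 (Real.sqrt 3 / 2)) := by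
  have h := (tendsto_two_pi_mul_div_kappa.mul tendsto_kappa_mul_Sfun.sqrt).mul
    tendsto_kappa_mul_one_add_Sfun.sqrt
  rw [mul_assoc, mul_self_sqrt (by norm_num), ← div_eq_mul_one_div] at h
  refine h.congr' ?_
  filter_upwards [self_mem_nhdsWithin] with l (hl : 0 < l)
  have hk := kappa_pos hl
  rw [sqrt_mul hk.le, sqrt_mul hk.le]
  field_simp
  rw [sq_sqrt hk.le]
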